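/- arXiv:2208.13907 — 2 statements merged into one kernel-verified Lean document; each statement's English description precedes it below -/
import Mathlib

section
/- Let H be the directed graph on the vertex set of a control-flow graph G whose edge set is the union of the forward inference edges and the backward inference edges. Then every simple directed cycle of H has at most two vertices: if v_1, …, v_k are distinct vertices such that each pair (v_i, v_{i+1}) and the pair (v_k, v_1) are edges of H, then k ≤ 2. -/
/-- A control-flow graph (CFG): a directed graph with a distinguished entry
vertex `s` (no incoming edges) and terminal vertex `t` (no outgoing edges),
`s ≠ t`, such that every vertex is reachable from `s` and every vertex can
reach `t` by a directed path. -/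
structure CFG (V : Type*) where
  E : V → V → Prop
  s : V
  t : V
  s_ne_t : s ≠ t
  no_in_s : ∀ v, ¬ E v s
  no_out_t : ∀ v, ¬ E t v
  reach_from_s : ∀ v, Relation.ReflTransGen E s v
  reach_to_t : ∀ v, Relation.ReflTransGen E v t

/-- The (vertex) coverage profile of a trace `T` (a finite collection of
walks, each walk given as a list of vertices): the set of vertices visited
by at least one walk of the trace. -/
def cover {V : Type*} (T : List (List V)) : Set V := {v | ∃ w ∈ T, v ∈ w}

/-- The edge coverage profile of a trace `T`: the set of (directed) edges
traversed by at least one walk of the trace. -/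
def edgeCover {V : Type*} (T : List (List V)) : Set (V × V) :=
  {p | ∃ w ∈ T, p ∈ w.zip w.tail}

namespace CFG

variable {V : Type*} (G : CFG V)

/-- `A u`: the set of vertices reachable from `s` by a directed path avoiding `u`. -/
def A (u : V) : Set V :=
  {v | v ≠ u ∧ Relation.ReflTransGen (fun x y => G.E x y ∧ x ≠ u ∧ y ≠ u) G.s v}

/-- `B u`: the set of vertices from which `t` is reachable by a directed path avoiding `u`. -/
def B (u : V) : Set V :=
  {v | v ≠ u ∧ Relation.ReflTransGen (fun x y => G.E x y ∧ x ≠ u ∧ y ≠ u) v G.t}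

/-- Out-neighbors of `u`. -/
def Nout (u : V) : Set V := {v | G.E u v}

/-- In-neighbors of `u`. -/
def Nin (u : V) : Set V := {v | G.E v u}

/-- An `s`-`t` walk: a nonempty list starting at `s`, ending at `t`, whose
consecutive vertices are joined by edges. -/
def IsWalk (w : List V) : Prop :=
  w.head? = some G.s ∧ w.getLast? = some G.t ∧ w.Chain' G.E

/-- An execution trace: a finite collection of `s`-`t` walks. -/
def IsTrace (T : List (List V)) : Prop := ∀ w ∈ T, G.IsWalk w

/-- `𝒞`: the family of all coverage profiles of execution traces. -/
def Profiles : Set (Set V) := {C | ∃ T, G.IsTrace T ∧ C = cover T}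

/-- `S` is a valid instrumentation set if any two coverage profiles agreeing
on `S` are equal. -/
def ValidInstr (S : Set V) : Prop :=
  ∀ C ∈ G.Profiles, ∀ C' ∈ G.Profiles, C ∩ S = C' ∩ S → C = C'

/-- A vertex `u` is ambiguous if some in-neighbor of `u` lies in `A u ∩ B u`
and some out-neighbor of `u` lies in `A u ∩ B u`. -/
def Ambiguous (u : V) : Prop :=
  (∃ x ∈ G.Nin u, x ∈ G.A u ∩ G.B u) ∧ (∃ y ∈ G.Nout u, y ∈ G.A u ∩ G.B u)

/-- `u` is forward inferable if `Nout u \ A u ≠ ∅` and `Nout u ∩ A u ∩ B u = ∅`. -/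
def FwdInferable (u : V) : Prop :=
  (G.Nout u \ G.A u).Nonempty ∧ G.Nout u ∩ (G.A u ∩ G.B u) = ∅

/-- `(u, v)` is a forward inference edge if `u` is forward inferable and
`v ∈ Nout u \ A u`. -/
def FwdEdge (u v : V) : Prop := G.FwdInferable u ∧ v ∈ G.Nout u \ G.A u

/-- `u` is backward inferable if `Nin u \ B u ≠ ∅` and `Nin u ∩ A u ∩ B u = ∅`. -/
def BwdInferable (u : V) : Prop :=
  (G.Nin u \ G.B u).Nonempty ∧ G.Nin u ∩ (G.A u ∩ G.B u) = ∅

/-- `(u, v)` is a backward inference edge if `u` is backward inferable and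
`v ∈ Nin u \ B u`. -/
def BwdEdge (u v : V) : Prop := G.BwdInferable u ∧ v ∈ G.Nin u \ G.B u

/-- `S ⊆ E` is a valid edge-instrumentation set for vertex coverage if any
two execution traces whose edge coverage profiles agree on `S` have equal
vertex coverage profiles. -/
def ValidEdgeInstr (S : Set (V × V)) : Prop :=
  ∀ T T' : List (List V), G.IsTrace T → G.IsTrace T' →
    edgeCover T ∩ S = edgeCover T' ∩ S → cover T = cover T'

end CFG

/-! `v ∉ A u` says that `u` dominates `v`, and `v ∉ B u` that `u` postdominates `v`; both
relations are transitive and antisymmetric on distinct vertices. Along an inference edge `x → y`,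
domination by any `z ≠ x` passes from `x` to `y`: for a forward edge by transitivity, for a
backward edge because `y → x` is an edge of `G`. So if a simple cycle of inference edges leaves `x`
by a forward edge, going once around it shows that `x` dominates every vertex of the cycle, and
dually for backward edges and postdomination. By antisymmetry at most one vertex of the cycle
dominates all of it and at most one postdominates all of it. -/

namespace List

variable {α : Type*}

theorem IsChain.exists_cycle_cons_of_mem {r : α → α → Prop} {a x : α} {l : List α}
    (hc : IsChain r (a :: (l ++ [a]))) (hx : x ∈ a :: l) :
    ∃ l', IsChain r (x :: (l' ++ [x])) ∧ a :: l ~r x :: l' := by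
  obtain ⟨s, t, hst⟩ := append_of_mem hx
  have hrot : a :: l ~r x :: (t ++ s) := by
    rw [hst, ← cons_append]
    exact isRotated_append
  have hcyc : Cycle.Chain r (a :: l : List α) := hc
  rw [Cycle.coe_eq_coe.mpr hrot] at hcyc
  exact ⟨t ++ s, hcyc, hrot⟩

theorem Nodup.length_le_two {p q : α → Prop} {l : List α} (hl : l.Nodup)
    (hpq : ∀ x ∈ l, p x ∨ q x) (hp : ∀ x ∈ l, ∀ y ∈ l, p x → p y → x = y)
    (hq : ∀ x ∈ l, ∀ y ∈ l, q x → q y → x = y) : l.length ≤ 2 := by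
  classical
  rw [← toFinset_card_of_nodup hl]
  calc l.toFinset.card
      ≤ (l.toFinset.filter p ∪ l.toFinset.filter q).card := by
        refine Finset.card_le_card fun x hx => ?_
        have hx' := mem_toFinset.mp hx
        simp only [Finset.mem_union, Finset.mem_filter]
        exact (hpq x hx').imp (⟨hx, ·⟩) (⟨hx, ·⟩)
    _ ≤ (l.toFinset.filter p).card + (l.toFinset.filter q).card := Finset.card_union_le _ _
    _ ≤ 1 + 1 := by
        gcongr <;> refine Finset.card_le_one.mpr fun x hx y hy => ?_ <;>
          simp only [Finset.mem_filter, mem_toFinset] at hx hy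
        exacts [hp x hx.1 y hy.1 hx.2 hy.2, hq x hx.1 y hy.1 hx.2 hy.2]

end List

namespace CFG

variable {V : Type*} (G : CFG V)

/-- Reversing all edges and swapping `s` with `t` exchanges `A` with `B`, and forward with
backward inference edges. -/
def reverse : CFG V where
  E x y := G.E y x
  s := G.t
  t := G.s
  s_ne_t := G.s_ne_t.symm
  no_in_s := G.no_out_t
  no_out_t := G.no_in_s
  reach_from_s v := Relation.reflTransGen_swap.mpr (G.reach_to_t v)
  reach_to_t v := Relation.reflTransGen_swap.mpr (G.reach_from_s v)

@[simp]
theorem reverse_reverse : G.reverse.reverse = G := rfl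

@[simp]
theorem reverse_A (u : V) : G.reverse.A u = G.B u := by
  have hswap : (fun x y => G.reverse.E x y ∧ x ≠ u ∧ y ≠ u) =
      Function.swap (fun x y => G.E x y ∧ x ≠ u ∧ y ≠ u) := by
    funext x y
    exact propext (and_congr_right' and_comm)
  ext v
  change _ ∧ Relation.ReflTransGen _ G.t v ↔ _
  rw [hswap, Relation.reflTransGen_swap]
  rfl

@[simp]
theorem reverse_B (u : V) : G.reverse.B u = G.A u := by
  simpa using (G.reverse.reverse_A u).symm

theorem reverse_fwdEdge {u v : V} : G.reverse.FwdEdge u v ↔ G.BwdEdge u v := by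
  simp only [FwdEdge, BwdEdge, FwdInferable, BwdInferable, reverse_A, reverse_B,
    Set.inter_comm (G.B u)]
  rfl

theorem reverse_bwdEdge {u v : V} : G.reverse.BwdEdge u v ↔ G.FwdEdge u v := by
  simpa using G.reverse.reverse_fwdEdge.symm

theorem mem_A_of_E {u x y : V} (hx : x ∈ G.A u) (hxy : G.E x y) (hy : y ≠ u) : y ∈ G.A u :=
  ⟨hy, hx.2.tail ⟨hxy, hx.1, hy⟩⟩

theorem notMem_A_trans {u m w : V} (hm : m ∉ G.A u) (hw : w ∉ G.A m) : w ∉ G.A u := by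
  suffices ∀ w, Relation.ReflTransGen (fun x y => G.E x y ∧ x ≠ u ∧ y ≠ u) G.s w →
      w ≠ u → w ∈ G.A m from fun hwA => hw (this w hwA.2 hwA.1)
  intro w hpath hwu
  induction hpath with
  | refl => exact ⟨fun hsm => hm (hsm ▸ ⟨hwu, .refl⟩), .refl⟩
  | tail hpath hxy ih =>
    exact G.mem_A_of_E (ih hxy.2.1) hxy.1 fun hym => hm (hym ▸ ⟨hwu, hpath.tail hxy⟩)

theorem mem_A_or_mem_A {u v : V} (huv : u ≠ v) : u ∈ G.A v ∨ v ∈ G.A u := by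
  suffices ∀ w, Relation.ReflTransGen G.E G.s w →
      u ∈ G.A v ∨ v ∈ G.A u ∨ (w ∈ G.A u ∧ w ∈ G.A v) by
    rcases this v (G.reach_from_s v) with h | h | ⟨h, -⟩
    exacts [.inl h, .inr h, .inr h]
  intro w hw
  induction hw with
  | refl =>
    by_cases hsu : G.s = u
    · exact .inl ⟨huv, hsu ▸ .refl⟩
    by_cases hsv : G.s = v
    · exact .inr (.inl ⟨huv.symm, hsv ▸ .refl⟩)
    exact .inr (.inr ⟨⟨hsu, .refl⟩, ⟨hsv, .refl⟩⟩)
  | @tail x y _ hxy ih =>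
    rcases ih with h | h | ⟨hxu, hxv⟩
    · exact .inl h
    · exact .inr (.inl h)
    by_cases hyu : y = u
    · subst hyu
      exact .inl (G.mem_A_of_E hxv hxy huv)
    by_cases hyv : y = v
    · subst hyv
      exact .inr (.inl (G.mem_A_of_E hxu hxy huv.symm))
    exact .inr (.inr ⟨G.mem_A_of_E hxu hxy hyu, G.mem_A_of_E hxv hxy hyv⟩)

theorem mem_B_or_mem_B {u v : V} (huv : u ≠ v) : u ∈ G.B v ∨ v ∈ G.B u := by
  simpa using G.reverse.mem_A_or_mem_A huv

def InferenceEdge (u v : V) : Prop := G.FwdEdge u v ∨ G.BwdEdge u v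

theorem reverse_inferenceEdge {u v : V} : G.reverse.InferenceEdge u v ↔ G.InferenceEdge u v :=
  (or_congr G.reverse_fwdEdge G.reverse_bwdEdge).trans or_comm

theorem notMem_A_of_inferenceEdge {x y z : V} (h : G.InferenceEdge x y) (hxz : x ≠ z)
    (hx : x ∉ G.A z) : y ∉ G.A z := by
  rcases h with ⟨-, -, hxy⟩ | ⟨-, hyx, -⟩
  · exact G.notMem_A_trans hx hxy
  · exact fun hy => hx (G.mem_A_of_E hy hyx hxz)

theorem forall_notMem_A_of_fwdEdge {x y : V} {m : List V}
    (hc : List.IsChain G.InferenceEdge (x :: y :: (m ++ [x]))) (hx : x ∉ y :: m)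
    (hxy : G.FwdEdge x y) : ∀ w ∈ x :: y :: m, w ∉ G.A x := by
  have hpath : List.IsChain (fun p q => G.InferenceEdge p q ∧ p ≠ x) (y :: m) := by
    have : List.IsChain G.InferenceEdge (y :: m) :=
      (List.isChain_cons_cons.mp hc).2.infix ⟨[], [x], by simp⟩
    exact this.imp_of_mem_imp fun p _ hp _ hpq => ⟨hpq, fun h => hx (h ▸ hp)⟩
  have hprop := hpath.induction (fun w => w ∉ G.A x) _
    (fun p q hpq hp => G.notMem_A_of_inferenceEdge hpq.1 hpq.2 hp) (fun _ => hxy.2.2)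
  rintro w (_ | ⟨_, hw⟩)
  · exact fun h => h.1 rfl
  · exact hprop w hw

theorem forall_notMem_B_of_bwdEdge {x y : V} {m : List V}
    (hc : List.IsChain G.InferenceEdge (x :: y :: (m ++ [x]))) (hx : x ∉ y :: m)
    (hxy : G.BwdEdge x y) : ∀ w ∈ x :: y :: m, w ∉ G.B x := by
  simpa using G.reverse.forall_notMem_A_of_fwdEdge
    (hc.imp fun _ _ => G.reverse_inferenceEdge.mpr) hx (G.reverse_fwdEdge.mpr hxy)

theorem forall_notMem_A_or_forall_notMem_B_of_mem_cycle {a x : V} {l : List V}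
    (hc : List.IsChain G.InferenceEdge (a :: (l ++ [a]))) (hnd : (a :: l).Nodup)
    (hx : x ∈ a :: l) : (∀ w ∈ a :: l, w ∉ G.A x) ∨ (∀ w ∈ a :: l, w ∉ G.B x) := by
  obtain ⟨l', hc', hrot⟩ := hc.exists_cycle_cons_of_mem hx
  simp only [hrot.mem_iff]
  rcases l' with _ | ⟨y, m⟩
  · simpa using .inl fun h => h.1 rfl
  have hxm : x ∉ y :: m := (List.nodup_cons.mp (hrot.nodup_iff.mp hnd)).1
  rcases (List.isChain_cons_cons.mp hc').1 with hxy | hxy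
  · exact .inl (G.forall_notMem_A_of_fwdEdge hc' hxm hxy)
  · exact .inr (G.forall_notMem_B_of_bwdEdge hc' hxm hxy)

end CFG

theorem stmt_8_general {V : Type*} (G : CFG V) (a : V) (l : List V)
    (hnd : (a :: l).Nodup)
    (hc : List.Chain (fun x y => G.FwdEdge x y ∨ G.BwdEdge x y) a (l ++ [a])) :
    (a :: l).length ≤ 2 :=
  hnd.length_le_two (fun _ hx => G.forall_notMem_A_or_forall_notMem_B_of_mem_cycle hc hnd hx)
    (fun x hx y hy hxA hyA => by_contra fun hxy =>
      (G.mem_A_or_mem_A hxy).elim (hyA x hx) (hxA y hy))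
    (fun x hx y hy hxB hyB => by_contra fun hxy =>
      (G.mem_B_or_mem_B hxy).elim (hyB x hx) (hxB y hy))

/-- In the union of the forward and backward inference graphs, every simple
directed cycle has at most two vertices. -/
theorem stmt_8 {V : Type*} [Finite V] (G : CFG V) (a : V) (l : List V)
    (hnd : (a :: l).Nodup)
    (hc : List.Chain (fun x y => G.FwdEdge x y ∨ G.BwdEdge x y) a (l ++ [a])) :
    (a :: l).length ≤ 2 :=
  stmt_8_general G a l hnd hc
end

section
/- Let G be the control-flow graph formed by the series composition of k diamonds: vertices v_1, …, v_{3k+1}, entry v_1, terminal v_{3k+1}, and for each 0 ≤ j < k the edges (v_{3j+1}, v_{3j+2}), (v_{3j+1}, v_{3j+3}), (v_{3j+2}, v_{3j+4}), (v_{3j+3}, v_{3j+4}). Then each of the 2k vertices of in-degree 1 (the vertices v_{3j+2} and v_{3j+3} for 0 ≤ j < k) is ambiguous, and consequently every valid instrumentation set of G has size at least 2k. -/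
/-!
An ambiguous vertex `u`, with in-neighbour `x` and out-neighbour `y` in `A u ∩ B u`, lies in every
valid instrumentation set: the walks `s ⇝ x ⇝ t` and `s ⇝ y ⇝ t` avoiding `u` form a trace whose
profile misses `u`, and adding the detour `s ⇝ x → u → y ⇝ t` changes that profile only at `u`.
In the chain of diamonds every side vertex `3j + d` is ambiguous, because paths can go around it
through the opposite side `3j + (3 - d)` of its diamond; there are `2k` such vertices.
-/

open Relation List

theorem List.IsChain.cons_append_of_getLast {α : Type*} {r : α → α → Prop} {a b : α}
    {l₁ l₂ : List α} (h₁ : (a :: l₁).IsChain r)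
    (hb : (a :: l₁).getLast (cons_ne_nil a l₁) = b) (h₂ : (b :: l₂).IsChain r) :
    (a :: (l₁ ++ l₂)).IsChain r := by
  rw [← cons_append]
  refine h₁.append h₂.tail fun x hx y hy => ?_
  rw [getLast?_eq_some_getLast (cons_ne_nil a l₁), hb, Option.mem_some_iff] at hx
  exact hx ▸ h₂.rel_head? hy

theorem List.getLast_cons_append_of_getLast {α : Type*} {a b : α} {l₁ l₂ : List α}
    (hb : (a :: l₁).getLast (cons_ne_nil a l₁) = b) :
    (a :: (l₁ ++ l₂)).getLast (cons_ne_nil a _) = (b :: l₂).getLast (cons_ne_nil b l₂) := by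
  cases l₂ with
  | nil => simpa using hb
  | cons c l =>
    rw [getLast_cons_cons, getLast_cons (by simp), getLast_append_of_ne_nil (by simp)]

namespace CFG

variable {V : Type*} {G : CFG V}

variable (G) in
def EAvoiding (u x y : V) : Prop := G.E x y ∧ x ≠ u ∧ y ≠ u

theorem exists_isChain_of_reflTransGen_eAvoiding {u a b : V}
    (h : ReflTransGen (G.EAvoiding u) a b) (hb : b ≠ u) :
    ∃ l, (a :: l).IsChain G.E ∧ (a :: l).getLast (cons_ne_nil a l) = b ∧ u ∉ a :: l := by
  induction h using ReflTransGen.head_induction_on with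
  | refl => exact ⟨[], .singleton b, rfl, by simpa using hb.symm⟩
  | head hac _ ih =>
    obtain ⟨l, hl, hlast, hul⟩ := ih
    exact ⟨_ :: l, hl.cons_cons hac.1, by rwa [getLast_cons_cons],
      not_mem_cons_of_ne_of_not_mem hac.2.1.symm hul⟩

theorem isWalk_cons {l : List V} (h : (G.s :: l).IsChain G.E)
    (ht : (G.s :: l).getLast (cons_ne_nil G.s l) = G.t) : G.IsWalk (G.s :: l) :=
  ⟨rfl, by rw [getLast?_eq_some_getLast (cons_ne_nil G.s l), ht], h⟩

theorem ValidInstr.mem_of_insert_mem_profiles {S : Set V} (hS : G.ValidInstr S) {u : V}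
    {C : Set V} (hC : C ∈ G.Profiles) (hCu : insert u C ∈ G.Profiles) (huC : u ∉ C) : u ∈ S := by
  by_contra huS
  have h := hS _ hC _ hCu (by rw [Set.insert_inter_of_notMem huS])
  exact huC (h ▸ Set.mem_insert u C)

theorem Ambiguous.exists_insert_mem_profiles {u : V} (hu : G.Ambiguous u) :
    ∃ C ∈ G.Profiles, u ∉ C ∧ insert u C ∈ G.Profiles := by
  obtain ⟨⟨x, hxu, hxA, hxB⟩, ⟨y, huy, hyA, hyB⟩⟩ := hu
  have htu : G.t ≠ u := fun h => G.no_out_t y (h ▸ huy)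
  obtain ⟨l₁, hc₁, hl₁, hu₁⟩ := exists_isChain_of_reflTransGen_eAvoiding hxA.2 hxA.1
  obtain ⟨l₂, hc₂, hl₂, hu₂⟩ := exists_isChain_of_reflTransGen_eAvoiding hxB.2 htu
  obtain ⟨l₃, hc₃, hl₃, hu₃⟩ := exists_isChain_of_reflTransGen_eAvoiding hyA.2 hyA.1
  obtain ⟨l₄, hc₄, hl₄, hu₄⟩ := exists_isChain_of_reflTransGen_eAvoiding hyB.2 htu
  set T := [G.s :: (l₁ ++ l₂), G.s :: (l₃ ++ l₄)]
  set w := G.s :: (l₁ ++ u :: y :: l₄)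
  have hT : G.IsTrace T := by
    simp only [T, IsTrace, mem_cons, not_mem_nil, or_false, forall_eq_or_imp, forall_eq]
    exact ⟨isWalk_cons (hc₁.cons_append_of_getLast hl₁ hc₂)
        (getLast_cons_append_of_getLast hl₁ ▸ hl₂),
      isWalk_cons (hc₃.cons_append_of_getLast hl₃ hc₄)
        (getLast_cons_append_of_getLast hl₃ ▸ hl₄)⟩
  have hw : G.IsWalk w :=
    isWalk_cons (hc₁.cons_append_of_getLast hl₁ (hc₄.cons_cons huy |>.cons_cons hxu))
      (getLast_cons_append_of_getLast hl₁ ▸ by simpa using hl₄)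
  refine ⟨cover T, ⟨T, hT, rfl⟩, ?_, ⟨w :: T, ?_, ?_⟩⟩
  · simp_all [T, cover]
  · simp_all [IsTrace]
  · have hy : y ∈ G.s :: l₃ := hl₃ ▸ getLast_mem _
    ext v
    simp only [T, w, cover, Set.mem_insert_iff, Set.mem_ofPred_eq, mem_cons, mem_append,
      exists_eq_or_imp, exists_eq_left, not_mem_nil, or_false]
    simp only [mem_cons] at hy
    grind

theorem Ambiguous.mem_of_validInstr {u : V} (hu : G.Ambiguous u) {S : Set V}
    (hS : G.ValidInstr S) : u ∈ S :=
  let ⟨_, hC, huC, hCu⟩ := hu.exists_insert_mem_profiles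
  hS.mem_of_insert_mem_profiles hC hCu huC

end CFG

def diamondChainEdge (k : ℕ) (a b : Fin (3 * k + 1)) : Prop :=
  ∃ j < k,
    ((a : ℕ) = 3 * j ∧ (b : ℕ) = 3 * j + 1) ∨
    ((a : ℕ) = 3 * j ∧ (b : ℕ) = 3 * j + 2) ∨
    ((a : ℕ) = 3 * j + 1 ∧ (b : ℕ) = 3 * j + 3) ∨
    ((a : ℕ) = 3 * j + 2 ∧ (b : ℕ) = 3 * j + 3)

section DiamondChain

variable {k : ℕ} {G : CFG (Fin (3 * k + 1))}

theorem diamondChainEdge_side {j d : ℕ} (hj : j < k) (hd : d = 1 ∨ d = 2) :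
    diamondChainEdge k ⟨3 * j, by omega⟩ ⟨3 * j + d, by omega⟩ ∧
      diamondChainEdge k ⟨3 * j + d, by omega⟩ ⟨3 * (j + 1), by omega⟩ :=
  ⟨⟨j, hj, by simp only [true_and]; omega⟩, ⟨j, hj, by simp only; omega⟩⟩

/-- The path through the side `3ℓ + (3 - u % 3)` of each diamond `ℓ` avoids `u`, since that side
differs from `u` modulo `3`. -/
theorem reflTransGen_eAvoiding_diamondChain (hE : G.E = diamondChainEdge k) {u : Fin (3 * k + 1)}
    (hu : (u : ℕ) % 3 ≠ 0) {a b : ℕ} (hab : a ≤ b) (hb : b ≤ k) :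
    ReflTransGen (G.EAvoiding u) ⟨3 * a, by omega⟩ ⟨3 * b, by omega⟩ := by
  induction b, hab using Nat.le_induction with
  | base => exact .refl
  | succ b hab ih =>
    obtain ⟨h₁, h₂⟩ :=
      diamondChainEdge_side (k := k) (j := b) (d := 3 - (u : ℕ) % 3) (by omega) (by omega)
    refine ((ih (by omega)).tail ⟨hE ▸ h₁, ?_, ?_⟩).tail ⟨hE ▸ h₂, ?_, ?_⟩ <;>
      exact Fin.ne_of_val_ne (by simp only; omega)

theorem ambiguous_diamondChain_side (hE : G.E = diamondChainEdge k)
    (hs : G.s = ⟨0, Nat.succ_pos _⟩) (ht : G.t = ⟨3 * k, Nat.lt_succ_self _⟩) {j d : ℕ}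
    (hj : j < k) (hd : d = 1 ∨ d = 2) :
    G.Ambiguous ⟨3 * j + d, by omega⟩ := by
  have hu : (3 * j + d) % 3 ≠ 0 := by omega
  have reach {a b : ℕ} (hab : a ≤ b) (hb : b ≤ k) :=
    reflTransGen_eAvoiding_diamondChain hE (u := ⟨3 * j + d, by omega⟩) hu hab hb
  obtain ⟨hin, hout⟩ := diamondChainEdge_side hj hd
  have hne {n : ℕ} (hn : n % 3 = 0) (hnk : n ≤ 3 * k) :
      (⟨n, by omega⟩ : Fin (3 * k + 1)) ≠ ⟨3 * j + d, by omega⟩ := by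
    simp only [ne_eq, Fin.mk.injEq]; omega
  refine ⟨⟨_, hE ▸ hin, ⟨hne (by omega) (by omega), ?_⟩, ⟨hne (by omega) (by omega), ?_⟩⟩,
    ⟨_, hE ▸ hout, ⟨hne (by omega) (by omega), ?_⟩, ⟨hne (by omega) (by omega), ?_⟩⟩⟩
  · rw [hs]; exact reach (Nat.zero_le j) hj.le
  · rw [ht]; exact reach hj.le le_rfl
  · rw [hs]; exact reach (Nat.zero_le _) hj
  · rw [ht]; exact reach hj le_rfl

theorem two_mul_le_ncard_of_sides_mem {S : Set (Fin (3 * k + 1))}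
    (h : ∀ j (hj : j < k) d (hd : d = 1 ∨ d = 2), (⟨3 * j + d, by omega⟩ : Fin (3 * k + 1)) ∈ S) :
    2 * k ≤ S.ncard := by
  let f (p : Fin k × Fin 2) : Fin (3 * k + 1) := ⟨3 * p.1 + (p.2 + 1), by omega⟩
  have hf : Function.Injective f := by
    rintro ⟨j, i⟩ ⟨j', i'⟩ hjj'
    simp only [f, Fin.mk.injEq] at hjj'
    ext <;> simp only <;> omega
  calc 2 * k = (Set.range f).ncard := by simp [Set.ncard_range_of_injective hf, mul_comm]
    _ ≤ S.ncard := Set.ncard_le_ncard (Set.range_subset_iff.2 fun p => h _ p.1.2 _ (by omega))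

end DiamondChain

/-- For the series composition of `k` diamonds (vertices `v₁, …, v₃ₖ₊₁`,
here indices `0, …, 3k`), each of the `2k` vertices of in-degree 1 (the
vertices `v₃ⱼ₊₂` and `v₃ⱼ₊₃`, i.e. indices `3j+1` and `3j+2`, for `j < k`) is
ambiguous, and consequently every valid instrumentation set has size at
least `2k`. -/
theorem stmt_18 (k : ℕ) (G : CFG (Fin (3 * k + 1)))
    (hs : G.s = ⟨0, by omega⟩) (ht : G.t = ⟨3 * k, by omega⟩)
    (hE : ∀ a b : Fin (3 * k + 1), G.E a b ↔ ∃ j < k,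
      ((a : ℕ) = 3 * j ∧ (b : ℕ) = 3 * j + 1) ∨
      ((a : ℕ) = 3 * j ∧ (b : ℕ) = 3 * j + 2) ∨
      ((a : ℕ) = 3 * j + 1 ∧ (b : ℕ) = 3 * j + 3) ∨
      ((a : ℕ) = 3 * j + 2 ∧ (b : ℕ) = 3 * j + 3)) :
    (∀ j (hj : j < k),
      G.Ambiguous ⟨3 * j + 1, by omega⟩ ∧ G.Ambiguous ⟨3 * j + 2, by omega⟩) ∧
    (∀ S : Set (Fin (3 * k + 1)), G.ValidInstr S → 2 * k ≤ S.ncard) := by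
  have hE' : G.E = diamondChainEdge k := funext₂ fun a b => propext (hE a b)
  have amb {j d : ℕ} (hj : j < k) (hd : d = 1 ∨ d = 2) :=
    ambiguous_diamondChain_side hE' hs ht hj hd
  refine ⟨fun j hj => ⟨amb hj (.inl rfl), amb hj (.inr rfl)⟩, fun S hS => ?_⟩
  exact two_mul_le_ncard_of_sides_mem fun j hj d hd => (amb hj hd).mem_of_validInstr hS
end
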